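/- arXiv:1704.06979 — 6 statements merged into one kernel-verified Lean document; each statement's English description precedes it below -/
import Mathlib

section
/- A nonzero real polynomial with exactly k nonzero coefficients has at most k-1 positive real roots, counted with multiplicity. -/
/-! By Descartes' rule of signs the number of positive roots is at most the number of sign
changes in the sequence of nonzero coefficients, and a sequence of `k` terms has at most `k - 1`
sign changes. -/

namespace Polynomial

theorem length_filter_coeffList_ne_zero {R : Type*} [Semiring R] [DecidableEq R] (P : R[X]) :
    (P.coeffList.filter (· ≠ 0)).length = P.support.card := by
  rcases eq_or_ne P 0 with rfl | hP
  · simp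
  rw [coeffList, List.filter_map, List.length_map, List.filter_reverse, List.length_reverse,
    degree_eq_natDegree hP]
  have hsupport : P.support = (Finset.range (P.natDegree + 1)).filter (P.coeff · ≠ 0) := by
    ext n
    simp only [mem_support_iff, Finset.mem_filter, Finset.mem_range]
    exact ⟨fun h => ⟨Nat.lt_succ_of_le (le_natDegree_of_ne_zero h), h⟩, And.right⟩
  rw [hsupport]
  rfl

theorem signVariations_le_card_support_sub_one {R : Type*} [Semiring R] [LinearOrder R]
    (P : R[X]) : P.signVariations ≤ P.support.card - 1 := by
  rw [signVariations, ← length_filter_coeffList_ne_zero, List.filter_map]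
  refine Nat.sub_le_sub_right ((List.destutter_sublist _ _).length_le.trans ?_) 1
  simp [Function.comp_def, sign_eq_zero_iff]

end Polynomial

theorem sparse_poly_positive_roots_general (f : Polynomial ℝ) (k : ℕ)
    (hk : f.support.card = k) :
    (f.roots.filter (fun x => 0 < x)).card ≤ k - 1 := by
  subst hk
  calc (f.roots.filter (fun x => 0 < x)).card = f.roots.countP (0 < ·) :=
        (Multiset.countP_eq_card_filter _ _).symm
    _ ≤ f.signVariations := f.roots_countP_pos_le_signVariations
    _ ≤ f.support.card - 1 := f.signVariations_le_card_support_sub_one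

theorem sparse_poly_positive_roots (f : Polynomial ℝ) (k : ℕ)
    (hf : f ≠ 0) (hk : f.support.card = k) :
    (f.roots.filter (fun x => 0 < x)).card ≤ k - 1 :=
  sparse_poly_positive_roots_general f k hk
end

section
/- Let F ∈ ℂ[x] be a polynomial of degree n, m ∈ ℂ, r > 0, l a natural number, and suppose |F^{(l)}(m)| r^l / l! > Σ_{i ≠ l} |F^{(i)}(m)| r^i / i!. Then the closed disk of radius r centered at m contains exactly l roots of F counted with multiplicity. -/
/-!
Expand `F` around `m` as `F(z) = ∑ bᵢ (z - m)ⁱ` with `bᵢ = F⁽ⁱ⁾(m) / i!`. On the circle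
`|z - m| = r` the hypothesis says that `G(z) = b_l (z - m)ˡ` dominates the sum of the other
terms, i.e. `|F - G| < |G|`. By Rouché's theorem `F` then has as many roots in the disk as `G`,
namely `l`, and none on the circle. Rouché's theorem comes from the argument principle: `F / G`
stays in the disk `|w - 1| < 1`, where `log` is holomorphic, so
`∮ F'/F - ∮ G'/G = ∮ (log (F / G))' = 0`; and for a polynomial `p'/p = ∑ₜ 1/(z - t)` over its
roots, whose integrals count the roots inside the circle.
-/

open Polynomial Metric Complex Real Finset

theorem left_ne_zero_of_norm_sub_lt {E : Type*} [SeminormedAddGroup E] {a b : E}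
    (h : ‖a - b‖ < ‖b‖) : a ≠ 0 := by
  rintro rfl
  simp at h

theorem right_ne_zero_of_norm_sub_lt {E : Type*} [SeminormedAddGroup E] {a b : E}
    (h : ‖a - b‖ < ‖b‖) : b ≠ 0 := by
  rintro rfl
  simp at h
  exact (norm_nonneg a).not_gt h

theorem circleIntegral_sub_inv_of_notMem_closedBall {c t : ℂ} {R : ℝ} (hR : 0 ≤ R)
    (ht : t ∉ closedBall c R) : (∮ z in C(c, R), (z - t)⁻¹) = 0 := by
  have hd : DifferentiableOn ℂ (fun z => (z - t)⁻¹) (closedBall c R) := fun z hz =>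
    ((differentiableAt_id.sub_const t).inv
      (sub_ne_zero.2 (ne_of_mem_of_not_mem hz ht))).differentiableWithinAt
  exact (hd.diffContOnCl_ball subset_rfl).circleIntegral_eq_zero hR

theorem circleIntegrable_sub_inv_of_notMem_sphere {c t : ℂ} {R : ℝ} (hR : 0 ≤ R)
    (ht : t ∉ sphere c R) : CircleIntegrable (fun z => (z - t)⁻¹) c R :=
  circleIntegrable_sub_inv_iff.2 (.inr (by rwa [abs_of_nonneg hR]))

theorem circleIntegrable_multiset_sum_sub_inv {s : Multiset ℂ} {c : ℂ} {R : ℝ} (hR : 0 ≤ R)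
    (hs : ∀ t ∈ s, t ∉ sphere c R) :
    CircleIntegrable (fun z => (s.map fun t => (z - t)⁻¹).sum) c R := by
  induction s using Multiset.induction_on with
  | empty => simp
  | cons t s ih =>
    simp only [Multiset.map_cons, Multiset.sum_cons]
    exact (circleIntegrable_sub_inv_of_notMem_sphere hR (hs t (s.mem_cons_self t))).add
      (ih fun u hu => hs u (Multiset.mem_cons_of_mem hu))

theorem circleIntegral_multiset_sum_sub_inv {s : Multiset ℂ} {c : ℂ} {R : ℝ} (hR : 0 ≤ R)
    (hs : ∀ t ∈ s, t ∉ sphere c R) :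
    (∮ z in C(c, R), (s.map fun t => (z - t)⁻¹).sum)
      = 2 * π * I * (s.filter fun t => ‖t - c‖ < R).card := by
  induction s using Multiset.induction_on with
  | empty => simp [circleIntegral]
  | cons t s ih =>
    have hs' : ∀ u ∈ s, u ∉ sphere c R := fun u hu => hs u (Multiset.mem_cons_of_mem hu)
    have ht := hs t (s.mem_cons_self t)
    simp only [Multiset.map_cons, Multiset.sum_cons]
    rw [circleIntegral.integral_add (circleIntegrable_sub_inv_of_notMem_sphere hR ht)
      (circleIntegrable_multiset_sum_sub_inv hR hs'), ih hs', Multiset.filter_cons]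
    split_ifs with hlt
    · rw [circleIntegral.integral_sub_inv_of_mem_ball (mem_ball_iff_norm.2 hlt)]
      simp only [Multiset.card_add, Multiset.card_singleton]
      push_cast
      ring
    · rw [circleIntegral_sub_inv_of_notMem_closedBall hR fun h => ?_]
      · simp
      · exact (mem_closedBall_iff_norm.1 h).lt_or_eq.elim hlt (ht <| mem_sphere_iff_norm.2 ·)

theorem circleIntegrable_logDeriv {f : ℂ → ℂ} {U : Set ℂ} {c : ℂ} {R : ℝ} (hR : 0 ≤ R)
    (hU : IsOpen U) (hf : DifferentiableOn ℂ f U) (hsU : sphere c R ⊆ U)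
    (h0 : ∀ z ∈ sphere c R, f z ≠ 0) : CircleIntegrable (logDeriv f) c R :=
  ContinuousOn.circleIntegrable hR <|
    (((hf.analyticOnNhd hU).deriv.continuousOn).mono hsU).div (hf.continuousOn.mono hsU) h0

theorem circleIntegral_logDeriv_eq_of_norm_sub_lt {f g : ℂ → ℂ} {U : Set ℂ} {c : ℂ} {R : ℝ}
    (hR : 0 ≤ R) (hU : IsOpen U) (hf : DifferentiableOn ℂ f U) (hg : DifferentiableOn ℂ g U)
    (hsU : sphere c R ⊆ U) (hlt : ∀ z ∈ sphere c R, ‖f z - g z‖ < ‖g z‖) :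
    (∮ z in C(c, R), logDeriv f z) = ∮ z in C(c, R), logDeriv g z := by
  have hf0 z (hz : z ∈ sphere c R) : f z ≠ 0 := left_ne_zero_of_norm_sub_lt (hlt z hz)
  have hg0 z (hz : z ∈ sphere c R) : g z ≠ 0 := right_ne_zero_of_norm_sub_lt (hlt z hz)
  have hprim : ∀ z ∈ sphere c R, HasDerivWithinAt (fun w => log (f w / g w))
      (logDeriv f z - logDeriv g z) (sphere c R) z := by
    intro z hz
    have hfz := hf.differentiableAt (hU.mem_nhds (hsU hz))
    have hgz := hg.differentiableAt (hU.mem_nhds (hsU hz))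
    have hslit : f z / g z ∈ slitPlane := ball_one_subset_slitPlane <| by
      rw [mem_ball_iff_norm, div_sub_one (hg0 z hz), norm_div]
      exact (div_lt_one (norm_pos_iff.2 (hg0 z hz))).2 (hlt z hz)
    rw [← logDeriv_div z (hf0 z hz) (hg0 z hz) hfz hgz, logDeriv_apply]
    exact ((hfz.div hgz (hg0 z hz)).hasDerivAt.clog hslit).hasDerivWithinAt
  have h := circleIntegral.integral_eq_zero_of_hasDerivWithinAt hR hprim
  rwa [circleIntegral.integral_sub (circleIntegrable_logDeriv hR hU hf hsU hf0)
    (circleIntegrable_logDeriv hR hU hg hsU hg0), sub_eq_zero] at h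

namespace Polynomial

theorem circleIntegral_logDeriv_eval (p : ℂ[X]) {c : ℂ} {R : ℝ} (hR : 0 ≤ R)
    (hp : ∀ z ∈ sphere c R, p.eval z ≠ 0) :
    (∮ z in C(c, R), logDeriv (fun w => p.eval w) z)
      = 2 * π * I * (p.roots.filter fun t => ‖t - c‖ < R).card := by
  have hroots : ∀ t ∈ p.roots, t ∉ sphere c R := fun t ht hts =>
    hp t hts (isRoot_of_mem_roots ht)
  rw [← circleIntegral_multiset_sum_sub_inv hR hroots]
  refine circleIntegral.integral_congr hR fun z hz => ?_
  rw [logDeriv_apply, Polynomial.deriv,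
    (IsAlgClosed.splits p).eval_derivative_div_eval_of_ne_zero (hp z hz)]
  simp only [one_div]

theorem card_roots_filter_eq_of_norm_sub_lt (F G : ℂ[X]) {c : ℂ} {R : ℝ} (hR : 0 ≤ R)
    (hlt : ∀ z ∈ sphere c R, ‖F.eval z - G.eval z‖ < ‖G.eval z‖) :
    (F.roots.filter fun t => ‖t - c‖ < R).card = (G.roots.filter fun t => ‖t - c‖ < R).card := by
  have h := circleIntegral_logDeriv_eq_of_norm_sub_lt hR isOpen_univ
    F.differentiable.differentiableOn G.differentiable.differentiableOn (Set.subset_univ _) hlt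
  rw [F.circleIntegral_logDeriv_eval hR fun z hz => left_ne_zero_of_norm_sub_lt (hlt z hz),
    G.circleIntegral_logDeriv_eval hR fun z hz => right_ne_zero_of_norm_sub_lt (hlt z hz)] at h
  exact_mod_cast mul_left_cancel₀ two_pi_I_ne_zero h

theorem eval_eq_sum_range_taylor_coeff {R : Type*} [CommRing R] (F : R[X]) (m z : R) :
    F.eval z = ∑ i ∈ range (F.natDegree + 1), (taylor m F).coeff i * (z - m) ^ i := by
  rw [← taylor_eval_sub m, eval_eq_sum_range, natDegree_taylor]

theorem taylor_coeff_eq_iterate_derivative_div_factorial {K : Type*} [Field K] [CharZero K]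
    (F : K[X]) (m : K) (i : ℕ) :
    (taylor m F).coeff i = (derivative^[i] F).eval m / i.factorial := by
  rw [taylor_coeff, ← factorial_smul_hasseDeriv, eq_div_iff (by exact_mod_cast i.factorial_ne_zero)]
  simp [mul_comm]

theorem card_roots_filter_C_mul_X_sub_C_pow {a m : ℂ} (ha : a ≠ 0) (l : ℕ) {r : ℝ} (hr : 0 < r) :
    ((C a * (X - C m) ^ l).roots.filter fun t => ‖t - m‖ < r).card = l := by
  rw [roots_C_mul _ ha, roots_pow, roots_X_sub_C, Multiset.nsmul_singleton,
    Multiset.filter_eq_self.2 fun t ht => by simpa [Multiset.eq_of_mem_replicate ht] using hr,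
    Multiset.card_replicate]

theorem norm_eval_sub_lt_of_taylor_coeff_dominant (F : ℂ[X]) {m z : ℂ} {l : ℕ}
    (hl : l ≤ F.natDegree)
    (hdom : ∑ i ∈ (range (F.natDegree + 1)).erase l, ‖(taylor m F).coeff i‖ * ‖z - m‖ ^ i
      < ‖(taylor m F).coeff l‖ * ‖z - m‖ ^ l) :
    ‖F.eval z - (C ((taylor m F).coeff l) * (X - C m) ^ l).eval z‖
      < ‖(C ((taylor m F).coeff l) * (X - C m) ^ l).eval z‖ := by
  rw [eval_eq_sum_range_taylor_coeff F m z, ← add_sum_erase _ _ (mem_range_succ_iff.2 hl)]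
  simp only [eval_mul, eval_C, eval_pow, eval_sub, eval_X, add_sub_cancel_left, norm_mul, norm_pow]
  calc ‖∑ i ∈ (range (F.natDegree + 1)).erase l, (taylor m F).coeff i * (z - m) ^ i‖
      ≤ ∑ i ∈ (range (F.natDegree + 1)).erase l, ‖(taylor m F).coeff i * (z - m) ^ i‖ :=
        norm_sum_le _ _
    _ = ∑ i ∈ (range (F.natDegree + 1)).erase l, ‖(taylor m F).coeff i‖ * ‖z - m‖ ^ i := by
        simp only [norm_mul, norm_pow]
    _ < _ := hdom

theorem card_roots_filter_le_eq_of_taylor_coeff_dominant (F : ℂ[X]) (m : ℂ) {r : ℝ} (hr : 0 < r)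
    (l : ℕ) (hdom : ∑ i ∈ (range (F.natDegree + 1)).erase l, ‖(taylor m F).coeff i‖ * r ^ i
      < ‖(taylor m F).coeff l‖ * r ^ l) :
    (F.roots.filter fun z => ‖z - m‖ ≤ r).card = l := by
  have hbl : (taylor m F).coeff l ≠ 0 := by
    intro h
    rw [h, norm_zero, zero_mul] at hdom
    exact hdom.not_ge (sum_nonneg fun i _ => by positivity)
  have hl : l ≤ F.natDegree := natDegree_taylor F m ▸ le_natDegree_of_ne_zero hbl
  have hlt : ∀ z ∈ sphere m r, ‖F.eval z - (C ((taylor m F).coeff l) * (X - C m) ^ l).eval z‖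
      < ‖(C ((taylor m F).coeff l) * (X - C m) ^ l).eval z‖ := fun z hz =>
    F.norm_eval_sub_lt_of_taylor_coeff_dominant hl (by rwa [mem_sphere_iff_norm.1 hz])
  have hsphere : ∀ z ∈ F.roots, ‖z - m‖ ≠ r := fun z hz hzr =>
    left_ne_zero_of_norm_sub_lt (hlt z (mem_sphere_iff_norm.2 hzr)) (isRoot_of_mem_roots hz)
  rw [Multiset.filter_congr fun z hz => (le_iff_lt_or_eq.trans (or_iff_left (hsphere z hz))),
    card_roots_filter_eq_of_norm_sub_lt F _ hr.le hlt, card_roots_filter_C_mul_X_sub_C_pow hbl l hr]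

end Polynomial

theorem pellet_Tl_test_general (F : Polynomial ℂ) (n : ℕ) (hn : F.natDegree = n)
    (m : ℂ) (r : ℝ) (hr : 0 < r) (l : ℕ)
    (hT : ‖(Polynomial.derivative^[l] F).eval m‖ * r ^ l / (l.factorial : ℝ) >
      ∑ i ∈ (Finset.range (n + 1)).erase l,
        ‖(Polynomial.derivative^[i] F).eval m‖ * r ^ i / (i.factorial : ℝ)) :
    (F.roots.filter (fun z => ‖z - m‖ ≤ r)).card = l := by
  subst hn
  refine F.card_roots_filter_le_eq_of_taylor_coeff_dominant m hr l ?_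
  simpa only [taylor_coeff_eq_iterate_derivative_div_factorial, norm_div, Complex.norm_natCast,
    div_mul_eq_mul_div, gt_iff_lt] using hT

theorem pellet_Tl_test (F : Polynomial ℂ) (n : ℕ) (hn : F.natDegree = n)
    (m : ℂ) (r : ℝ) (hr : 0 < r) (l : ℕ) (hl : l ≤ n)
    (hT : ‖(Polynomial.derivative^[l] F).eval m‖ * r ^ l / (l.factorial : ℝ) >
      ∑ i ∈ (Finset.range (n + 1)).erase l,
        ‖(Polynomial.derivative^[i] F).eval m‖ * r ^ i / (i.factorial : ℝ)) :
    (F.roots.filter (fun z => ‖z - m‖ ≤ r)).card = l :=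
  pellet_Tl_test_general F n hn m r hr l hT
end

section
/- Let F ∈ ℂ[x] have degree n with roots z_1,…,z_n (with multiplicity), let m ∈ ℂ with F(m) ≠ 0, let r > 0, and let a_i be the coefficients of F_Δ(x) = F(m + r·x). Then a_i/a_0 = (r^i / i!) · Σ over i-tuples (j_1,…,j_i) of pairwise distinct indices of ∏_{ℓ=1}^{i} 1/(m - z_{j_ℓ}). -/
/-!
Each linear factor rescales as `(X - z) ∘ (m + r X) = (m - z) (1 + (r / (m - z)) X)`, so
`F(m + r X) = F(m) ∏ⱼ (1 + (r / (m - zⱼ)) X)` and `aᵢ / a₀` is the `i`-th elementary symmetric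
function of the `r / (m - zⱼ)`. Every `i`-subset of the roots is the image of exactly `i!`
injective `i`-tuples, whence the factor `1 / i!`.
-/

open Polynomial Finset

theorem coeff_prod_one_add_C_mul_X {R ι : Type*} [CommSemiring R] (s : Finset ι) (w : ι → R)
    (k : ℕ) :
    (∏ j ∈ s, (1 + C (w j) * X)).coeff k = ∑ t ∈ s.powersetCard k, ∏ j ∈ t, w j := by
  classical
  have hmonomial (t : Finset ι) : ∏ j ∈ t, C (w j) * X = C (∏ j ∈ t, w j) * X ^ #t := by
    rw [prod_mul_distrib, prod_const, map_prod]
  simp only [prod_one_add, hmonomial, finsetSum_coeff, coeff_C_mul_X_pow, powersetCard_eq_filter,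
    sum_filter, eq_comm (a := k)]

theorem X_sub_C_comp_C_add_C_mul_X {K : Type*} [Field K] {z m : K} (hz : m ≠ z) (r : K) :
    (X - C z).comp (C m + C r * X) = C (m - z) * (1 + C (r / (m - z)) * X) := by
  rw [sub_comp, X_comp, C_comp, mul_add, ← mul_assoc, ← C_mul,
    mul_div_cancel₀ _ (sub_ne_zero.2 hz), map_sub]
  ring

theorem C_mul_prod_X_sub_C_comp_C_add_C_mul_X {K ι : Type*} [Field K] (s : Finset ι) (c : K)
    (z : ι → K) {m : K} (hz : ∀ j ∈ s, m ≠ z j) (r : K) :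
    (C c * ∏ j ∈ s, (X - C (z j))).comp (C m + C r * X) =
      C (c * ∏ j ∈ s, (m - z j)) * ∏ j ∈ s, (1 + C (r / (m - z j)) * X) := by
  rw [mul_comp, C_comp, Polynomial.prod_comp,
    prod_congr rfl fun j hj => X_sub_C_comp_C_add_C_mul_X (hz j hj) r, prod_mul_distrib,
    map_mul, map_prod, mul_assoc]

theorem card_filter_injective_image_eq {α : Type*} [Fintype α] [DecidableEq α] {i : ℕ}
    {S : Finset α} (hS : #S = i) :
    #{σ : Fin i → α | Function.Injective σ ∧ univ.image σ = S} = i.factorial := by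
  have hcard : Fintype.card (Fin i ≃ S) = i.factorial := by
    rw [Fintype.card_equiv (S.equivFinOfCardEq hS).symm, Fintype.card_fin]
  rw [← hcard, ← card_univ]
  refine (card_bij (fun (e : Fin i ≃ S) _ ℓ => (e ℓ : α)) (fun e _ => ?_)
    (fun e _ e' _ h => ?_) fun σ hσ => ?_).symm
  · refine mem_filter.2 ⟨mem_univ _, Subtype.val_injective.comp e.injective, ?_⟩
    ext a
    simpa using ⟨fun ⟨ℓ, hℓ⟩ => hℓ ▸ (e ℓ).2, fun ha => ⟨e.symm ⟨a, ha⟩, by simp⟩⟩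
  · exact Equiv.ext fun ℓ => Subtype.val_injective (congrFun h ℓ)
  · obtain ⟨-, hinj, rfl⟩ := mem_filter.1 hσ
    let τ : Fin i → univ.image σ := fun ℓ => ⟨σ ℓ, mem_image_of_mem σ (mem_univ ℓ)⟩
    have hτ : Function.Injective τ := fun ℓ ℓ' h => hinj (congrArg Subtype.val h)
    have hcardτ : Fintype.card (Fin i) = Fintype.card (univ.image σ) := by
      rw [Fintype.card_fin, Fintype.card_coe, hS]
    exact ⟨Equiv.ofBijective τ ((Fintype.bijective_iff_injective_and_card τ).2 ⟨hτ, hcardτ⟩),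
      mem_univ _, rfl⟩

theorem sum_injective_prod_eq_factorial_mul {R α : Type*} [CommSemiring R] [Fintype α]
    [DecidableEq α] (f : α → R) (i : ℕ) :
    ∑ σ : Fin i → α with Function.Injective σ, ∏ ℓ, f (σ ℓ) =
      i.factorial * ∑ S ∈ powersetCard i univ, ∏ j ∈ S, f j := by
  have himage (σ : Fin i → α) (hσ : σ ∈ ({σ | Function.Injective σ} : Finset _)) :
      univ.image σ ∈ powersetCard i univ := by
    rw [mem_powersetCard, card_image_of_injective _ (mem_filter.1 hσ).2]
    simp
  rw [← sum_fiberwise_of_maps_to himage, mul_sum]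
  refine sum_congr rfl fun S hS => ?_
  rw [filter_filter, sum_congr rfl fun σ hσ => ?_, sum_const,
    card_filter_injective_image_eq (mem_powersetCard.1 hS).2, nsmul_eq_mul]
  obtain ⟨-, hinj, rfl⟩ := mem_filter.1 hσ
  exact (prod_image fun ℓ _ ℓ' _ h => hinj h).symm

theorem shifted_coeff_ratio_general (n : ℕ) (c : ℂ) (z : Fin n → ℂ) (m : ℂ) (r : ℝ)
    (F : Polynomial ℂ)
    (hF : F = Polynomial.C c * ∏ j, (Polynomial.X - Polynomial.C (z j)))
    (hFm : F.eval m ≠ 0) (i : ℕ) :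
    (F.comp (Polynomial.C m + Polynomial.C (r : ℂ) * Polynomial.X)).coeff i /
      (F.comp (Polynomial.C m + Polynomial.C (r : ℂ) * Polynomial.X)).coeff 0 =
    ((r : ℂ) ^ i / (i.factorial : ℂ)) *
      ∑ σ ∈ Finset.univ.filter (fun σ : Fin i → Fin n => Function.Injective σ),
        ∏ ℓ : Fin i, (m - z (σ ℓ))⁻¹ := by
  have heval : F.eval m = c * ∏ j, (m - z j) := by simp [hF, eval_prod]
  have hz : ∀ j ∈ univ, m ≠ z j := fun j hj =>
    sub_ne_zero.1 (prod_ne_zero_iff.1 (right_ne_zero_of_mul (heval ▸ hFm)) j hj)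
  have hcoeff (k : ℕ) : (F.comp (C m + C (r : ℂ) * X)).coeff k =
      F.eval m * ∑ S ∈ powersetCard k univ, ∏ j ∈ S, (r : ℂ) / (m - z j) := by
    rw [heval, hF, C_mul_prod_X_sub_C_comp_C_add_C_mul_X _ _ _ hz, coeff_C_mul,
      coeff_prod_one_add_C_mul_X]
  rw [hcoeff, hcoeff, powersetCard_zero, sum_singleton, prod_empty, mul_one,
    mul_div_cancel_left₀ _ hFm, sum_injective_prod_eq_factorial_mul fun j => (m - z j)⁻¹,
    ← mul_assoc, div_mul_cancel₀ _ (Nat.cast_ne_zero.2 i.factorial_ne_zero), mul_sum]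
  refine sum_congr rfl fun S hS => ?_
  simp only [div_eq_mul_inv, prod_mul_distrib, prod_const, (mem_powersetCard.1 hS).2]

theorem shifted_coeff_ratio (n : ℕ) (c : ℂ) (hc : c ≠ 0) (z : Fin n → ℂ) (m : ℂ) (r : ℝ)
    (hr : 0 < r)
    (F : Polynomial ℂ)
    (hF : F = Polynomial.C c * ∏ j, (Polynomial.X - Polynomial.C (z j)))
    (hFm : F.eval m ≠ 0) (i : ℕ) :
    (F.comp (Polynomial.C m + Polynomial.C (r : ℂ) * Polynomial.X)).coeff i /
      (F.comp (Polynomial.C m + Polynomial.C (r : ℂ) * Polynomial.X)).coeff 0 =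
    ((r : ℂ) ^ i / (i.factorial : ℂ)) *
      ∑ σ ∈ Finset.univ.filter (fun σ : Fin i → Fin n => Function.Injective σ),
        ∏ ℓ : Fin i, (m - z (σ ℓ))⁻¹ :=
  shifted_coeff_ratio_general n c z m r F hF hFm i
end

section
/- Let f ∈ ℝ[x], let I = (a - r, a + r) ⊂ (0, ∞) be an interval containing no root of f and no root of f^{[1]} (so f is monotone and of constant sign on I, with f' = x^{j-1} f^{[1]} where j ≥ 1). Then for every t ∈ (a - r/2, a + r/2), |f(t)| ≥ (r/8)·t^{j-1}·inf_{x∈I}|f^{[1]}(x)|, provided a/r > 2n where n = deg f and j - 1 ≤ n. -/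
/-!
On `[t - r/2, t + r/2] ⊆ I` we have `f' = x^(j-1) f^[1]`, so `|f'| ≥ (t - r/2)^(j-1) m` with
`m = inf_I |f^[1]|`. If this bound is positive, `f'` has constant sign (Darboux), so `f` is
monotone; stepping from `t` by `r/2` in the direction in which `|f|` decreases does not change
the sign of `f` (no root in `I`), whence `|f(t)| ≥ (r/2)(t - r/2)^(j-1) m`. Finally `a/r > 2n`
and Bernoulli's inequality give `(t - r/2)^(j-1) ≥ t^(j-1)/2`.
-/

open Set Polynomial

theorem IsPreconnected.pos_of_pos_of_forall_ne_zero {f : ℝ → ℝ} {s : Set ℝ}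
    (hs : IsPreconnected s) (hf : ContinuousOn f s) (hne : ∀ x ∈ s, f x ≠ 0) {x y : ℝ} (hx : x ∈ s) (hy : y ∈ s)
    (hfx : 0 < f x) : 0 < f y := by
  by_contra! hfy
  obtain ⟨z, hz, hz0⟩ := hs.intermediate_value hy hx hf ⟨hfy, hfx.le⟩
  exact hne z hz hz0

theorem mul_le_abs_of_le_abs_deriv {f : ℝ → ℝ} (hf : Differentiable ℝ f) {t h B : ℝ}
    (hh : 0 ≤ h) (hne : ∀ x ∈ Icc (t - h) (t + h), f x ≠ 0)
    (hB : ∀ x ∈ Icc (t - h) (t + h), B ≤ |deriv f x|) : h * B ≤ |f t| := by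
  rcases le_or_gt B 0 with hB0 | hB0
  · exact (mul_nonpos_of_nonneg_of_nonpos hh hB0).trans (abs_nonneg _)
  wlog hpos : ∀ x ∈ Icc (t - h) (t + h), 0 < deriv f x generalizing f
  · -- Darboux: a derivative that never vanishes has constant sign.
    have hneg : ∀ x ∈ Icc (t - h) (t + h), deriv f x < 0 := by
      refine ((hasDerivWithinAt_forall_lt_or_forall_gt_of_forall_ne (convex_Icc _ _)
        (fun x _ ↦ (hf x).hasDerivAt.hasDerivWithinAt)
        (fun x hx h0 ↦ ?_)).resolve_right hpos)
      have := hB x hx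
      rw [h0, abs_zero] at this
      linarith
    simpa using this hf.neg (fun x hx ↦ neg_ne_zero.2 (hne x hx))
      (fun x hx ↦ by simpa using hB x hx) (fun x hx ↦ by simpa using neg_pos.2 (hneg x hx))
  have hD : IsPreconnected (Icc (t - h) (t + h)) := isPreconnected_Icc
  have hcont : ContinuousOn f (Icc (t - h) (t + h)) := hf.continuous.continuousOn
  have hlin : ∀ x ∈ Icc (t - h) (t + h), ∀ y ∈ Icc (t - h) (t + h), x ≤ y →
      B * (y - x) ≤ f y - f x :=
    (convex_Icc _ _).mul_sub_le_image_sub_of_le_deriv hcont hf.differentiableOn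
      fun x hx ↦ by
        rw [interior_Icc] at hx
        simpa [abs_of_pos (hpos x (Ioo_subset_Icc_self hx))] using hB x (Ioo_subset_Icc_self hx)
  have hl : t - h ∈ Icc (t - h) (t + h) := ⟨le_rfl, by linarith⟩
  have ht : t ∈ Icc (t - h) (t + h) := ⟨by linarith, by linarith⟩
  have hr : t + h ∈ Icc (t - h) (t + h) := ⟨by linarith, le_rfl⟩
  rcases (hne t ht).lt_or_gt with hft | hft
  · have hfr : f (t + h) < 0 := by
      simpa using hD.pos_of_pos_of_forall_ne_zero hcont.neg
        (fun x hx ↦ neg_ne_zero.2 (hne x hx)) ht hr (neg_pos.2 hft)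
    have hinc := hlin t ht (t + h) hr (by linarith)
    rw [abs_of_neg hft]
    linarith
  · have hfl := hD.pos_of_pos_of_forall_ne_zero hcont hne ht hl hft
    have hinc := hlin (t - h) hl t ht (by linarith)
    rw [abs_of_pos hft]
    linarith

theorem Polynomial.derivative_C_add_X_pow_mul {R : Type*} [CommSemiring R] (c : R) (g : R[X])
    {j : ℕ} (hj : 1 ≤ j) :
    derivative (C c + X ^ j * g) = X ^ (j - 1) * (C (j : R) * g + X * derivative g) := by
  obtain ⟨k, rfl⟩ := Nat.exists_eq_add_of_le' hj
  simp only [derivative_add, derivative_C, derivative_mul, derivative_X_pow, zero_add,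
    Nat.add_sub_cancel]
  push_cast
  ring

theorem half_mul_pow_le_pow_sub {t d : ℝ} (k : ℕ) (hd : 0 ≤ d) (hdt : d ≤ t)
    (hk : 2 * k * d ≤ t) : t ^ k / 2 ≤ (t - d) ^ k := by
  rcases hd.eq_or_lt with rfl | hd
  · simp only [sub_zero]; linarith [pow_nonneg hdt k]
  have ht : 0 < t := hd.trans_le hdt
  have hbern := one_add_mul_le_pow (a := -(d / t)) (by
    have : d / t ≤ 1 := (div_le_one ht).2 hdt
    linarith) k
  have hkd : (k : ℝ) * (d / t) ≤ 1 / 2 := by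
    rw [mul_div_assoc', div_le_iff₀ ht]; linarith
  calc t ^ k / 2 ≤ t ^ k * (1 + k * -(d / t)) := by nlinarith [pow_pos ht k]
    _ ≤ t ^ k * (1 + -(d / t)) ^ k := by gcongr
    _ = (t - d) ^ k := by rw [← mul_pow]; congr 1; field_simp; ring

theorem lower_bound_on_interval_general (f g : Polynomial ℝ) (c : ℝ) (j n : ℕ)
    (hj : 1 ≤ j) (hjn : j - 1 ≤ n)
    (hf : f = Polynomial.C c + Polynomial.X ^ j * g)
    (a r : ℝ) (hr : 0 < r) (hI : 0 < a - r) (har : a / r > 2 * n)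
    (hfroot : ∀ x ∈ Set.Ioo (a - r) (a + r), f.eval x ≠ 0) :
    ∀ t ∈ Set.Ioo (a - r / 2) (a + r / 2),
      |f.eval t| ≥ (r / 8) * t ^ (j - 1) *
        sInf ((fun x => |(Polynomial.C (j : ℝ) * g +
          Polynomial.X * Polynomial.derivative g).eval x|) '' Set.Ioo (a - r) (a + r)) := by
  rintro t ⟨hat, hta⟩
  set F := Polynomial.C (j : ℝ) * g + Polynomial.X * Polynomial.derivative g
  set m := sInf ((fun x => |F.eval x|) '' Ioo (a - r) (a + r))
  have hm0 : 0 ≤ m := Real.sInf_nonneg (by rintro _ ⟨x, -, rfl⟩; exact abs_nonneg _)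
  have hmle : ∀ x ∈ Ioo (a - r) (a + r), m ≤ |F.eval x| := fun x hx ↦
    csInf_le ⟨0, by rintro _ ⟨y, -, rfl⟩; exact abs_nonneg _⟩ ⟨x, hx, rfl⟩
  have hsub : Icc (t - r / 2) (t + r / 2) ⊆ Ioo (a - r) (a + r) := fun x hx ↦
    ⟨by linarith [hx.1], by linarith [hx.2]⟩
  have hderiv : ∀ x ∈ Icc (t - r / 2) (t + r / 2),
      (t - r / 2) ^ (j - 1) * m ≤ |deriv (fun x ↦ f.eval x) x| := fun x hx ↦ by
    rw [Polynomial.deriv, hf, derivative_C_add_X_pow_mul c g hj, eval_mul, eval_pow, eval_X,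
      abs_mul, abs_pow, abs_of_pos (by linarith [hx.1])]
    exact mul_le_mul (pow_le_pow_left₀ (by linarith) hx.1 _) (hmle x (hsub hx)) hm0
      (pow_nonneg (by linarith [hx.1]) _)
  have hft := mul_le_abs_of_le_abs_deriv f.differentiable (by linarith)
    (fun x hx ↦ hfroot x (hsub hx)) hderiv
  have hpow : t ^ (j - 1) / 2 ≤ (t - r / 2) ^ (j - 1) := by
    refine half_mul_pow_le_pow_sub _ (by linarith) (by linarith) ?_
    have hjn' : ((j - 1 : ℕ) : ℝ) * r ≤ n * r := by gcongr
    have hnr : 2 * n * r < a := by rwa [gt_iff_lt, lt_div_iff₀ hr] at har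
    linarith
  have htm : 0 ≤ t ^ (j - 1) * m := mul_nonneg (pow_nonneg (by linarith) _) hm0
  calc r / 8 * t ^ (j - 1) * m ≤ r / 2 * (t ^ (j - 1) / 2 * m) := by nlinarith
    _ ≤ r / 2 * ((t - r / 2) ^ (j - 1) * m) := by gcongr
    _ ≤ |f.eval t| := hft

theorem lower_bound_on_interval (f g : Polynomial ℝ) (c : ℝ) (j n : ℕ)
    (hc : c ≠ 0) (hj : 1 ≤ j) (hjn : j - 1 ≤ n)
    (hf : f = Polynomial.C c + Polynomial.X ^ j * g) (hg0 : g.coeff 0 ≠ 0)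
    (hn : f.natDegree = n)
    (a r : ℝ) (hr : 0 < r) (hI : 0 < a - r) (har : a / r > 2 * n)
    (hfroot : ∀ x ∈ Set.Ioo (a - r) (a + r), f.eval x ≠ 0)
    (hf1root : ∀ x ∈ Set.Ioo (a - r) (a + r),
      (Polynomial.C (j : ℝ) * g + Polynomial.X * Polynomial.derivative g).eval x ≠ 0) :
    ∀ t ∈ Set.Ioo (a - r / 2) (a + r / 2),
      |f.eval t| ≥ (r / 8) * t ^ (j - 1) *
        sInf ((fun x => |(Polynomial.C (j : ℝ) * g +
          Polynomial.X * Polynomial.derivative g).eval x|) '' Set.Ioo (a - r) (a + r)) :=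
  lower_bound_on_interval_general f g c j n hj hjn hf a r hr hI har hfroot
end

section
/- Let E_ℓ, E_r ≥ 0, not both zero, δ > 0, and suppose Ẽ_ℓ, Ẽ_r satisfy |Ẽ_ℓ - E_ℓ| < 2^{-L} and |Ẽ_r - E_r| < 2^{-L} with 2^{-L} ≤ (δ/(4(1+δ)))·max(E_ℓ, E_r). If Ẽ_ℓ - Ẽ_r > 2·2^{-L} then E_ℓ > E_r; if Ẽ_r - Ẽ_ℓ > 2·2^{-L} then E_r > E_ℓ; and if |Ẽ_ℓ - Ẽ_r| ≤ 2·2^{-L} then (1/(1+δ))·E_ℓ < E_r + 4·2^{-L} and E_r ≤ (1+δ)·E_ℓ + 4·2^{-L}. -/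
section Approximation

variable {α : Type*} [Field α] [LinearOrder α] [IsStrictOrderedRing α] {a b a' b' ε δ η : α}

theorem lt_of_abs_sub_lt_of_two_mul_lt_sub (ha : |a' - a| < ε) (hb : |b' - b| < ε)
    (h : 2 * ε < a' - b') : b < a := by
  rw [abs_lt] at ha hb
  linarith [ha.1, hb.2]

theorem abs_sub_lt_four_mul_of_abs_sub_le_two_mul (ha : |a' - a| < ε) (hb : |b' - b| < ε)
    (h : |a' - b'| ≤ 2 * ε) : |a - b| < 4 * ε := by
  rw [abs_lt] at ha hb ⊢
  rw [abs_le] at h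
  constructor <;> linarith [ha.1, ha.2, hb.1, hb.2, h.1, h.2]

theorem one_div_one_add_mul_lt_add_of_abs_sub_lt (ha : 0 ≤ a) (hδ : 0 ≤ δ)
    (h : |a - b| < η) : 1 / (1 + δ) * a < b + η :=
  calc 1 / (1 + δ) * a ≤ a := by
        rw [one_div_mul_eq_div]
        exact div_le_self ha (le_add_of_nonneg_right hδ)
    _ < b + η := by linarith [(abs_lt.mp h).2]

theorem lt_one_add_mul_add_of_abs_sub_lt (ha : 0 ≤ a) (hδ : 0 ≤ δ)
    (h : |a - b| < η) : b < (1 + δ) * a + η := by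
  nlinarith [(abs_lt.mp h).1, mul_nonneg hδ ha]

end Approximation

theorem soft_predicate_correct_general (El Er δ : ℝ) (L : ℕ)
    (hEl : 0 ≤ El) (hδ : 0 < δ)
    (tEl tEr : ℝ)
    (hal : |tEl - El| < (2 : ℝ) ^ (-(L : ℤ))) (har : |tEr - Er| < (2 : ℝ) ^ (-(L : ℤ))) :
    (tEl - tEr > 2 * (2 : ℝ) ^ (-(L : ℤ)) → El > Er) ∧
    (tEr - tEl > 2 * (2 : ℝ) ^ (-(L : ℤ)) → Er > El) ∧
    (|tEl - tEr| ≤ 2 * (2 : ℝ) ^ (-(L : ℤ)) →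
      (1 / (1 + δ)) * El < Er + 4 * (2 : ℝ) ^ (-(L : ℤ)) ∧
      Er ≤ (1 + δ) * El + 4 * (2 : ℝ) ^ (-(L : ℤ))) := by
  refine ⟨lt_of_abs_sub_lt_of_two_mul_lt_sub hal har,
    lt_of_abs_sub_lt_of_two_mul_lt_sub har hal, fun h => ?_⟩
  have hclose := abs_sub_lt_four_mul_of_abs_sub_le_two_mul hal har h
  exact ⟨one_div_one_add_mul_lt_add_of_abs_sub_lt hEl hδ.le hclose,
    (lt_one_add_mul_add_of_abs_sub_lt hEl hδ.le hclose).le⟩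

theorem soft_predicate_correct (El Er δ : ℝ) (L : ℕ)
    (hEl : 0 ≤ El) (hEr : 0 ≤ Er) (hne : El ≠ 0 ∨ Er ≠ 0) (hδ : 0 < δ)
    (tEl tEr : ℝ)
    (hal : |tEl - El| < (2 : ℝ) ^ (-(L : ℤ))) (har : |tEr - Er| < (2 : ℝ) ^ (-(L : ℤ)))
    (hL : (2 : ℝ) ^ (-(L : ℤ)) ≤ (δ / (4 * (1 + δ))) * max El Er) :
    (tEl - tEr > 2 * (2 : ℝ) ^ (-(L : ℤ)) → El > Er) ∧
    (tEr - tEl > 2 * (2 : ℝ) ^ (-(L : ℤ)) → Er > El) ∧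
    (|tEl - tEr| ≤ 2 * (2 : ℝ) ^ (-(L : ℤ)) →
      (1 / (1 + δ)) * El < Er + 4 * (2 : ℝ) ^ (-(L : ℤ)) ∧
      Er ≤ (1 + δ) * El + 4 * (2 : ℝ) ^ (-(L : ℤ))) :=
  soft_predicate_correct_general El Er δ L hEl hδ tEl tEr hal har
end

section
/- Let L, λ be nonnegative reals and let a finite list of disjoint real intervals be recursively modified by merging (replacing by their convex hull) any two intervals I, J whose distance is less than min(2^{-L}, λ·w(I)) until no such pair exists. If the initial list has N intervals of width at most w, then every interval in the final list has width at most (2 + λ)^N · max(2^{-L}, w). -/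
/-- The width of an interval represented by its pair of endpoints. -/
def intervalWidth (I : ℝ × ℝ) : ℝ := I.2 - I.1

/-- The distance between two intervals represented by their endpoints. -/
def intervalDist (I J : ℝ × ℝ) : ℝ := max 0 (max (J.1 - I.2) (I.1 - J.2))

/-- The convex hull (merge) of two intervals. -/
def intervalHull (I J : ℝ × ℝ) : ℝ × ℝ := (min I.1 J.1, max I.2 J.2)

/-- One merging step: two intervals whose distance is less than
`min (2^{-L}) (λ · w(I))` are replaced by their convex hull. -/
inductive MergeStep (L lam : ℝ) : Multiset (ℝ × ℝ) → Multiset (ℝ × ℝ) → Prop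
  | merge (I J : ℝ × ℝ) (S : Multiset (ℝ × ℝ))
      (h : intervalDist I J < min ((2 : ℝ) ^ (-L)) (lam * intervalWidth I)) :
      MergeStep L lam (I ::ₘ J ::ₘ S) (intervalHull I J ::ₘ S)


/-!
Each merge replaces two intervals of width at most `b` by their hull, whose width is at most
`b + b + λ b = (2 + λ) b`, since the merged pair is at distance at most `λ` times the width of
the first interval. A merge lowers the number of intervals by one, so at most `N` merges happen
and every interval ever produced has width at most `(2 + λ) ^ N` times the initial bound
`max (2^{-L}) w`.
-/

open Relation

def WidthBoundedBy (b : ℝ) (S : Multiset (ℝ × ℝ)) : Prop :=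
  ∀ I ∈ S, I.1 ≤ I.2 ∧ intervalWidth I ≤ b

lemma WidthBoundedBy.mono {b c : ℝ} {S : Multiset (ℝ × ℝ)} (hS : WidthBoundedBy b S)
    (hbc : b ≤ c) : WidthBoundedBy c S :=
  fun I hI => ⟨(hS I hI).1, (hS I hI).2.trans hbc⟩

lemma intervalHull_fst_le_snd {I J : ℝ × ℝ} (hI : I.1 ≤ I.2) :
    (intervalHull I J).1 ≤ (intervalHull I J).2 :=
  (min_le_left _ _).trans (hI.trans (le_max_left _ _))

lemma intervalWidth_hull_le {I J : ℝ × ℝ} (hI : I.1 ≤ I.2) (hJ : J.1 ≤ J.2) :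
    intervalWidth (intervalHull I J) ≤
      intervalWidth I + intervalWidth J + intervalDist I J := by
  have h₀ : 0 ≤ intervalDist I J := le_max_left _ _
  have h₁ : J.1 - I.2 ≤ intervalDist I J := (le_max_left _ _).trans (le_max_right _ _)
  have h₂ : I.1 - J.2 ≤ intervalDist I J := (le_max_right _ _).trans (le_max_right _ _)
  simp only [intervalWidth, intervalHull, min_def, max_def]
  split_ifs <;> linarith

namespace MergeStep

variable {L lam : ℝ} {S S' : Multiset (ℝ × ℝ)}

lemma card_eq (h : MergeStep L lam S S') : S.card = S'.card + 1 := by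
  cases h
  simp

lemma widthBoundedBy (hlam : 0 ≤ lam) (h : MergeStep L lam S S') {b : ℝ}
    (hS : WidthBoundedBy b S) : WidthBoundedBy ((2 + lam) * b) S' := by
  cases h with
  | merge I J R hdist =>
    obtain ⟨hI, hwI⟩ := hS I (by simp)
    obtain ⟨hJ, hwJ⟩ := hS J (by simp)
    have hb : 0 ≤ b := (sub_nonneg.2 hI).trans hwI
    have hd : intervalDist I J ≤ lam * b :=
      (hdist.trans_le (min_le_right _ _)).le.trans (mul_le_mul_of_nonneg_left hwI hlam)
    intro K hK
    rcases Multiset.mem_cons.1 hK with rfl | hK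
    · refine ⟨intervalHull_fst_le_snd hI, ?_⟩
      linarith [intervalWidth_hull_le hI hJ]
    · exact hS.mono (le_mul_of_one_le_left hb (by linarith)) K (by simp [hK])

end MergeStep

lemma widthBoundedBy_of_reflTransGen {L lam b : ℝ} (hlam : 0 ≤ lam)
    {S T : Multiset (ℝ × ℝ)} (h : ReflTransGen (MergeStep L lam) S T)
    (hS : WidthBoundedBy b S) :
    ∃ m : ℕ, T.card + m = S.card ∧ WidthBoundedBy ((2 + lam) ^ m * b) T := by
  induction h with
  | refl => exact ⟨0, by simp, by simpa using hS⟩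
  | tail _ hstep ih =>
    obtain ⟨m, hcard, hbound⟩ := ih
    refine ⟨m + 1, by rw [← hcard, hstep.card_eq]; ring, ?_⟩
    rw [pow_succ', mul_assoc]
    exact hstep.widthBoundedBy hlam hbound

theorem merged_intervals_width_bound_general (L lam w : ℝ) (hlam : 0 ≤ lam)
    (S₀ T : Multiset (ℝ × ℝ)) (N : ℕ) (hN : S₀.card = N)
    (hwf : ∀ I ∈ S₀, I.1 ≤ I.2)
    (hw0 : ∀ I ∈ S₀, intervalWidth I ≤ w)
    (hreach : Relation.ReflTransGen (MergeStep L lam) S₀ T) :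
    ∀ I ∈ T, intervalWidth I ≤ (2 + lam) ^ N * max ((2 : ℝ) ^ (-L)) w := by
  have hB : 0 ≤ max ((2 : ℝ) ^ (-L)) w :=
    (Real.rpow_pos_of_pos two_pos _).le.trans (le_max_left _ _)
  have h₀ : WidthBoundedBy (max ((2 : ℝ) ^ (-L)) w) S₀ :=
    fun I hI => ⟨hwf I hI, (hw0 I hI).trans (le_max_right _ _)⟩
  obtain ⟨m, hm, hT⟩ := widthBoundedBy_of_reflTransGen hlam hreach h₀
  intro I hI
  exact (hT I hI).2.trans <| mul_le_mul_of_nonneg_right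
    (pow_le_pow_right₀ (by linarith) (by omega)) hB

theorem merged_intervals_width_bound (L lam w : ℝ) (hL : 0 ≤ L) (hlam : 0 ≤ lam)
    (hw : 0 ≤ w) (S₀ T : Multiset (ℝ × ℝ)) (N : ℕ) (hN : S₀.card = N)
    (hwf : ∀ I ∈ S₀, I.1 ≤ I.2)
    (hw0 : ∀ I ∈ S₀, intervalWidth I ≤ w)
    (hreach : Relation.ReflTransGen (MergeStep L lam) S₀ T)
    (hterm : ∀ I ∈ T, ∀ J ∈ T.erase I,
      ¬ intervalDist I J < min ((2 : ℝ) ^ (-L)) (lam * intervalWidth I)) :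
    ∀ I ∈ T, intervalWidth I ≤ (2 + lam) ^ N * max ((2 : ℝ) ^ (-L)) w :=
  merged_intervals_width_bound_general L lam w hlam S₀ T N hN hwf hw0 hreach
end
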